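/- Let A ⊂ P^2 be a zero-dimensional subscheme of length 7 such that the intersection of A with any line has length ≤ 4. Then A imposes 7 independent conditions on cubics, i.e., h^0(J_A(3)) = 10 − 7 = 3. -/

import Mathlib

/-!
Fix `a ∈ A`; it suffices to find a cubic vanishing on the six points `T = A \ {a}` but not at
`a`, since then evaluation at `A` maps the 10-dimensional space of cubics onto `ℂ^A`. Group the
points of `T` by the line through `a` containing them: every such line meets `T` in at most
3 points. Hence `T` splits into three pairs `{q, r}` whose lines `qr` avoid `a` (pair a point of
a largest class with one of the largest other class, and induct), and the product of these
three lines is the required cubic.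
-/

open MvPolynomial Finset Matrix Submodule Module

theorem Finset.exists_pair_card_fiber_erase_erase_le {α β : Type*} [DecidableEq α]
    [DecidableEq β] (f : α → β) {T : Finset α} {m : ℕ} (hT : #T = 2 * (m + 1))
    (hfib : ∀ q ∈ T, #{s ∈ T | f s = f q} ≤ m + 1) :
    ∃ q ∈ T, ∃ r ∈ T, f q ≠ f r ∧
      ∀ s ∈ (T.erase q).erase r, #{t ∈ (T.erase q).erase r | f t = f s} ≤ m := by
  obtain ⟨q, hqT, hq⟩ :=
    T.exists_max_image (fun s => #{t ∈ T | f t = f s}) (card_pos.mp (by omega))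
  have hU : ({s ∈ T | ¬f s = f q}).Nonempty := by
    rw [← card_pos]
    have := card_filter_add_card_filter_not (s := T) (fun s => f s = f q)
    have := hfib q hqT
    omega
  obtain ⟨r, hrU, hr⟩ := exists_max_image _ (fun s => #{t ∈ T | f t = f s}) hU
  obtain ⟨hrT, hrq⟩ := mem_filter.mp hrU
  refine ⟨q, hqT, r, hrT, Ne.symm hrq, fun s hs => ?_⟩
  set T' := (T.erase q).erase r
  have hsT : s ∈ T := mem_of_mem_erase (mem_of_mem_erase hs)
  have hsub : {t ∈ T' | f t = f s} ⊆ {t ∈ T | f t = f s} :=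
    filter_subset_filter _ ((erase_subset _ _).trans (erase_subset _ _))
  have hlt : ∀ x ∈ T, f x = f s → x ∉ T' →
      #{t ∈ T' | f t = f s} < #{t ∈ T | f t = f s} :=
    fun x hx hfx hxT' => card_lt_card ((ssubset_iff_of_subset hsub).mpr
      ⟨x, mem_filter.mpr ⟨hx, hfx⟩, fun h => hxT' (mem_filter.mp h).1⟩)
  by_contra! hbig
  have := hfib s hsT
  have hsq : f s ≠ f q := fun h => by have := hlt q hqT h.symm (by simp [T']); omega
  have hsr : f s ≠ f r := fun h => by have := hlt r hrT h.symm (by simp [T']); omega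
  -- three disjoint fibres of size `≥ m + 1` cannot fit in `2(m + 1)` elements
  have hthree :
      #{t ∈ T | f t = f q} + #{t ∈ T | f t = f r} + #{t ∈ T | f t = f s} ≤ #T := by
    have := sum_card_fiberwise_eq_card_filter T {f q, f r, f s} f
    rw [sum_insert (by simp [Ne.symm hrq, Ne.symm hsq]), sum_pair (Ne.symm hsr),
      ← add_assoc] at this
    exact this ▸ card_filter_le _ _
  have := hq s hsT
  have := hr s (mem_filter.mpr ⟨hsT, hsq⟩)
  have := hbig.trans_le (card_le_card hsub)
  omega

namespace MvPolynomial

variable {σ K : Type*} [Fintype σ] [CommSemiring K]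

noncomputable def linearForm (n : σ → K) : MvPolynomial σ K := ∑ i, C (n i) * X i

theorem eval_linearForm (n x : σ → K) : eval x (linearForm n) = n ⬝ᵥ x := by
  simp [linearForm, dotProduct]

theorem isHomogeneous_linearForm (n : σ → K) : (linearForm n).IsHomogeneous 1 :=
  IsHomogeneous.sum _ _ _ fun i _ => by
    simpa using (isHomogeneous_C σ (n i)).mul (isHomogeneous_X K i)

theorem linearForm_ne_zero {n : σ → K} (hn : n ≠ 0) : linearForm n ≠ 0 := by
  classical
  obtain ⟨i, hi⟩ := Function.ne_iff.mp hn
  intro h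
  have := eval_linearForm n (Pi.single i 1)
  simp only [h, map_zero, dotProduct_single, mul_one] at this
  exact hi this.symm

end MvPolynomial

section Plane

variable {K : Type*} [Field K] {p q r : Fin 3 → K}

theorem dotProduct_cross_eq_zero_iff_mem_span_pair (h : LinearIndependent K ![p, q]) :
    r ⬝ᵥ p ⨯₃ q = 0 ↔ r ∈ span K {p, q} := by
  have hdet : LinearIndependent K ![r, p, q] ↔ IsUnit (det ![r, p, q]) :=
    (linearIndependent_rows_iff_isUnit (A := of ![r, p, q])).trans (isUnit_iff_isUnit_det _)
  rw [triple_product_eq_det, ← not_iff_not, ← ne_eq, ← isUnit_iff_ne_zero, ← hdet,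
    show ![r, p, q] = Fin.cons r ![p, q] from rfl, linearIndependent_finCons]
  simp [h, Set.pair_comm]

theorem span_pair_eq_of_dotProduct_cross_eq_zero (hq : LinearIndependent K ![p, q])
    (hr : LinearIndependent K ![p, r]) (h : p ⬝ᵥ q ⨯₃ r = 0) :
    span K {p, q} = span K {p, r} := by
  have hr_mem : r ∈ span K {p, q} := by
    rwa [← dotProduct_cross_eq_zero_iff_mem_span_pair hq, triple_product_permutation]
  have hq_mem : q ∈ span K {p, r} := by
    rwa [← dotProduct_cross_eq_zero_iff_mem_span_pair hr, triple_product_permutation,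
      ← cross_anticomm, dotProduct_neg, neg_eq_zero]
  exact le_antisymm
    (span_le.mpr (Set.insert_subset (subset_span (by simp)) (by simpa using hq_mem)))
    (span_le.mpr (Set.insert_subset (subset_span (by simp)) (by simpa using hr_mem)))

/-- `linearForm (q ⨯₃ r)` is the line through `q` and `r`; it misses `p` exactly when
`p ⬝ᵥ q ⨯₃ r ≠ 0`. -/
theorem exists_isHomogeneous_eval_eq_zero_of_card_fiber_le {β : Type*} [DecidableEq β]
    (p : Fin 3 → K) (f : (Fin 3 → K) → β) (m : ℕ) {T : Finset (Fin 3 → K)}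
    (hT : #T = 2 * m)
    (hf : ∀ q ∈ T, ∀ r ∈ T, f q ≠ f r → p ⬝ᵥ q ⨯₃ r ≠ 0)
    (hfib : ∀ q ∈ T, #{s ∈ T | f s = f q} ≤ m) :
    ∃ F : MvPolynomial (Fin 3) K,
      F.IsHomogeneous m ∧ (∀ q ∈ T, eval q F = 0) ∧ eval p F ≠ 0 := by
  classical
  induction m generalizing T with
  | zero => exact ⟨1, isHomogeneous_one _ _, by simp_all, by simp⟩
  | succ m ih =>
    obtain ⟨q, hqT, r, hrT, hqr, hfib'⟩ := exists_pair_card_fiber_erase_erase_le f hT hfib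
    have hsub : (T.erase q).erase r ⊆ T := (erase_subset _ _).trans (erase_subset _ _)
    have hcard : #((T.erase q).erase r) = 2 * m := by
      rw [card_erase_of_mem (mem_erase.mpr ⟨fun h => hqr (congrArg f h.symm), hrT⟩),
        card_erase_of_mem hqT]
      omega
    obtain ⟨F, hF, hFT, hFp⟩ := ih hcard (fun q hq r hr => hf q (hsub hq) r (hsub hr)) hfib'
    refine ⟨linearForm (q ⨯₃ r) * F, ?_, fun s hs => ?_, ?_⟩
    · simpa [add_comm] using (isHomogeneous_linearForm _).mul hF
    · rw [map_mul, eval_linearForm, dotProduct_comm]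
      obtain rfl | hsq := eq_or_ne s q
      · rw [dot_self_cross, zero_mul]
      obtain rfl | hsr := eq_or_ne s r
      · rw [dot_cross_self, zero_mul]
      rw [hFT s (mem_erase.mpr ⟨hsr, mem_erase.mpr ⟨hsq, hs⟩⟩), mul_zero]
    · rw [map_mul, eval_linearForm, dotProduct_comm]
      exact mul_ne_zero (hf q hqT r hrT hqr) hFp

/-- The fibre of `q ↦ span K {a, q}` through `q` lies on the line `a ⨯₃ q`, which also
contains `a`; so the bound `m + 1` on lines leaves `m` for each fibre. -/
theorem exists_mem_homogeneousSubmodule_separating (m : ℕ) {A : Finset (Fin 3 → K)}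
    (hcard : #A = 2 * m + 1) (hne : ∀ a ∈ A, a ≠ 0)
    (hproj : ∀ a ∈ A, ∀ b ∈ A, a ≠ b → ∀ c : K, a ≠ c • b)
    (hline : ∀ L : MvPolynomial (Fin 3) K, L.IsHomogeneous 1 → L ≠ 0 →
      {a : Fin 3 → K | a ∈ A ∧ eval a L = 0}.ncard ≤ m + 1)
    {a : Fin 3 → K} (ha : a ∈ A) :
    ∃ F ∈ homogeneousSubmodule (Fin 3) K m,
      (∀ b ∈ A, b ≠ a → eval b F = 0) ∧ eval a F ≠ 0 := by
  classical
  set T := A.erase a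
  have hindep : ∀ q ∈ T, LinearIndependent K ![a, q] := fun q hq =>
    (LinearIndependent.pair_iff' (hne a ha)).mpr fun c =>
      (hproj q (mem_of_mem_erase hq) a ha (ne_of_mem_erase hq) c).symm
  have hfib : ∀ q ∈ T, #{s ∈ T | span K {a, s} = span K {a, q}} ≤ m := by
    intro q hq
    have hsub : (↑(insert a {s ∈ T | span K {a, s} = span K {a, q}}) : Set (Fin 3 → K)) ⊆
        {x | x ∈ A ∧ eval x (linearForm (a ⨯₃ q)) = 0} := by
      intro x hx
      simp only [coe_insert, coe_filter, Set.mem_insert_iff, Set.mem_ofPred_eq] at hx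
      rw [Set.mem_ofPred_eq, eval_linearForm, dotProduct_comm]
      obtain rfl | ⟨hxT, hspan⟩ := hx
      · exact ⟨ha, dot_self_cross _ _⟩
      refine ⟨mem_of_mem_erase hxT,
        (dotProduct_cross_eq_zero_iff_mem_span_pair (hindep q hq)).mpr ?_⟩
      exact hspan ▸ subset_span (by simp)
    have := (Set.ncard_le_ncard hsub (A.finite_toSet.subset fun x hx => hx.1)).trans
      (hline _ (isHomogeneous_linearForm _)
        (linearForm_ne_zero (crossProduct_ne_zero_iff_linearIndependent.mpr (hindep q hq))))
    rwa [Set.ncard_coe_finset, card_insert_of_notMem (by simp [T]), add_le_add_iff_right] at this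
  obtain ⟨F, hF, hFT, hFa⟩ := exists_isHomogeneous_eval_eq_zero_of_card_fiber_le a
    (fun q => span K {a, q}) m (by rw [card_erase_of_mem ha, hcard]; rfl)
    (fun q hq r hr hqr h =>
      hqr (span_pair_eq_of_dotProduct_cross_eq_zero (hindep q hq) (hindep r hr) h))
    hfib
  exact ⟨F, (mem_homogeneousSubmodule m F).mpr hF,
    fun b hb hba => hFT b (mem_erase.mpr ⟨hba, hb⟩), hFa⟩

end Plane

instance MvPolynomial.finite_homogeneousSubmodule (σ R : Type*) [Finite σ] [CommSemiring R]
    (n : ℕ) : Module.Finite R (homogeneousSubmodule σ R n) :=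
  Module.Finite.iff_fg.mpr (weightedHomogeneousSubmodule_one σ R n ▸
    weightedHomogeneousSubmodule_fg R 1 (fun _ => one_ne_zero) n)

theorem MvPolynomial.finrank_homogeneousSubmodule (σ K : Type*) [Fintype σ] [Field K] (n : ℕ) :
    finrank K (homogeneousSubmodule σ K n) = (Fintype.card σ + n - 1).choose n := by
  classical
  have hdeg :
      {d : σ →₀ ℕ | d.degree = n} = ((univ : Finset σ).finsuppAntidiag n : Set _) := by
    ext d
    simp [Finsupp.degree_eq_sum]
  rw [homogeneousSubmodule_eq_finsupp_supported, hdeg, ← restrictSupport,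
    finrank_eq_card_basis (basisRestrictSupport K _)]
  simp [card_finsuppAntidiag_nat_eq_choose]

theorem Submodule.finrank_inf_ker_add_finrank_map {K M N : Type*} [Field K] [AddCommGroup M]
    [Module K M] [AddCommGroup N] [Module K N] (V : Submodule K M) [FiniteDimensional K V]
    (f : M →ₗ[K] N) :
    finrank K ↥(V ⊓ LinearMap.ker f) + finrank K ↥(V.map f) = finrank K V := by
  rw [← LinearMap.finrank_range_add_finrank_ker (f.domRestrict V), LinearMap.range_domRestrict,
    LinearMap.ker_domRestrict, add_comm]
  congr 1
  have h : comap V.subtype (LinearMap.ker f) = comap V.subtype (V ⊓ LinearMap.ker f) := by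
    rw [comap_inf, comap_subtype_self, top_inf_eq]
  rw [h]
  exact (comapSubtypeEquivOfLe inf_le_left).finrank_eq.symm

theorem MvPolynomial.finrank_inf_iInf_ker_aeval_add_card {σ K : Type*} [Field K]
    (V : Submodule K (MvPolynomial σ K)) [FiniteDimensional K V] (A : Finset (σ → K))
    (hsep : ∀ a ∈ A, ∃ f ∈ V, (∀ b ∈ A, b ≠ a → eval b f = 0) ∧ eval a f ≠ 0) :
    finrank K ↥(V ⊓ ⨅ a ∈ A, LinearMap.ker (aeval (R := K) a).toLinearMap) + #A =
      finrank K V := by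
  classical
  set Φ : MvPolynomial σ K →ₗ[K] (A → K) :=
    LinearMap.pi fun b => (aeval (R := K) b.1).toLinearMap
  have hker : ⨅ a ∈ A, LinearMap.ker (aeval (R := K) a).toLinearMap = LinearMap.ker Φ := by
    rw [LinearMap.ker_pi, iInf_subtype']
  have hmap : V.map Φ = ⊤ := by
    rw [eq_top_iff, ← (Pi.basisFun K A).span_eq, span_le]
    rintro _ ⟨b, rfl⟩
    obtain ⟨f, hfV, hf0, hfb⟩ := hsep b b.2
    refine ⟨(eval b.1 f)⁻¹ • f, V.smul_mem _ hfV, ?_⟩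
    rw [Pi.basisFun_apply]
    ext c
    obtain rfl | hcb := eq_or_ne c b
    · simp [Φ, hfb]
    · simp [Φ, hcb, hf0 c c.2 (Subtype.coe_ne_coe.mpr hcb)]
  rw [hker, ← V.finrank_inf_ker_add_finrank_map Φ, hmap, finrank_top,
    finrank_fintype_fun_eq_card, Fintype.card_coe]

/-- **Seven points in the plane, no five on a line, impose independent conditions on
cubics.** `A` is a set of 7 points of `ℙ²` given by nonzero homogeneous coordinate
vectors, pairwise non-proportional; every line (nonzero linear form) contains at most 4
of them. Then the space of homogeneous cubics vanishing on `A` has dimension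
`10 − 7 = 3`, i.e. `h⁰(J_A(3)) = 3`. -/
theorem seven_points_impose_independent_conditions_on_cubics
    (A : Finset (Fin 3 → ℂ)) (hcard : A.card = 7)
    (hne : ∀ a ∈ A, a ≠ 0)
    (hproj : ∀ a ∈ A, ∀ b ∈ A, a ≠ b → ∀ c : ℂ, a ≠ c • b)
    (hline : ∀ L : MvPolynomial (Fin 3) ℂ, L.IsHomogeneous 1 → L ≠ 0 →
      {a : Fin 3 → ℂ | a ∈ A ∧ MvPolynomial.eval a L = 0}.ncard ≤ 4) :
    Module.finrank ℂ
      ↥((homogeneousSubmodule (Fin 3) ℂ 3) ⊓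
        ⨅ a ∈ A, LinearMap.ker (MvPolynomial.aeval (R := ℂ) a).toLinearMap) = 3 := by
  have hdim := finrank_inf_iInf_ker_aeval_add_card _ A fun _ ha =>
    exists_mem_homogeneousSubmodule_separating 3 (by rw [hcard]) hne hproj hline ha
  rw [finrank_homogeneousSubmodule, hcard,
    show (Fintype.card (Fin 3) + 3 - 1).choose 3 = 10 from rfl] at hdim
  omega
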